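/- (Poincaré–Wirtinger's inequality) Let Φ : ℝ^d → [0,∞) be an N_∞ function, A_Φ its greatest convex radial minorant, identified with the invertible increasing function Ā : [0,∞) → [0,∞) via A_Φ(x) = Ā(|x|). For every u ∈ W^1L^Φ([0,T],ℝ^d), writing ū = (1/T)∫_0^T u(t) dt and ũ = u − ū, one has sup_{t∈[0,T]} |ũ(t)| ≤ T · Ā^{−1}(1/T) · ‖u'‖_{L^Φ}. -/

import Mathlib

open MeasureTheory Filter Set
open scoped ENNReal RealInnerProductSpace Topology

noncomputable section

/-- `ℝ^d` with the euclidean norm. -/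
abbrev Ed (d : ℕ) : Type := EuclideanSpace ℝ (Fin d)

/-- `Φ` is an `N_∞` function: differentiable, convex, nonnegative, vanishing exactly at `0`,
even, and superlinear at infinity. -/
def IsNInf {m : ℕ} (Φ : Ed m → ℝ) : Prop :=
  Differentiable ℝ Φ ∧ ConvexOn ℝ Set.univ Φ ∧ (∀ y, 0 ≤ Φ y) ∧ Φ 0 = 0 ∧
    (∀ y, y ≠ 0 → 0 < Φ y) ∧ (∀ y, Φ (-y) = Φ y) ∧
    Tendsto (fun y => Φ y / ‖y‖) (comap (fun y : Ed m => ‖y‖) atTop) atTop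

variable {d : ℕ}

/-- The modular `ρ_Φ(u) = ∫_0^T Φ(u(t)) dt`, as an extended nonnegative real. -/
def rhoE (T : ℝ) (Φ : Ed d → ℝ) (u : ℝ → Ed d) : ℝ≥0∞ :=
  ∫⁻ t in Icc (0:ℝ) T, ENNReal.ofReal (Φ (u t))

/-- `u ∈ L^Φ([0,T], ℝ^d)`. -/
def MemLphi (T : ℝ) (Φ : Ed d → ℝ) (u : ℝ → Ed d) : Prop :=
  AEMeasurable u (volume.restrict (Icc (0:ℝ) T)) ∧
    ∃ l : ℝ, 0 < l ∧ rhoE T Φ (fun t => l • u t) < ⊤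

/-- The Luxemburg norm of `u` on `[0,T]`. -/
def luxNorm (T : ℝ) (Φ : Ed d → ℝ) (u : ℝ → Ed d) : ℝ :=
  sInf {l : ℝ | 0 < l ∧ rhoE T Φ (fun t => l⁻¹ • u t) ≤ 1}

/-- `u ∈ W^1L^Φ([0,T], ℝ^d)` with a.e. derivative `u'` : `u` is absolutely continuous,
being the integral of the (integrable) function `u'`, and `u' ∈ L^Φ`. -/
def MemW1Lphi (T : ℝ) (Φ : Ed d → ℝ) (u u' : ℝ → Ed d) : Prop :=
  IntegrableOn u' (Icc (0:ℝ) T) ∧ MemLphi T Φ u' ∧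
    ∀ t ∈ Icc (0:ℝ) T, u t = u 0 + ∫ s in (0:ℝ)..t, u' s

/-- `Ψ` is a convex, nonnegative, radial minorant of `Φ`. -/
def RadialConvexMinorant (Φ Ψ : Ed d → ℝ) : Prop :=
  ConvexOn ℝ Set.univ Ψ ∧ (∀ x, 0 ≤ Ψ x) ∧ (∀ x y, ‖x‖ = ‖y‖ → Ψ x = Ψ y) ∧ ∀ x, Ψ x ≤ Φ x

/-- `A_Φ`, the greatest convex radial minorant of `Φ`. -/
def APhi (Φ : Ed d → ℝ) (x : Ed d) : ℝ :=
  sSup {r : ℝ | ∃ Ψ, RadialConvexMinorant Φ Ψ ∧ r = Ψ x}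

/-!
Put `I = ∫_0^T |u'|`. Any two values of `u` on `[0,T]` differ by at most `I`, hence so do `u(t)`
and the mean `ū`, which is an average of such values. For `λ` above the Luxemburg norm of `u'`
we have `ρ_Φ(u'/λ) < 1`, and Jensen's inequality for the convex function `A_Φ ≤ Φ`, applied to
`|u'|/λ` placed on a ray (radiality makes this harmless), gives
`Ā(I/(Tλ)) ≤ (1/T) ρ_Φ(u'/λ) < 1/T = Ā(Ā⁻¹(1/T))`. As `Ā` is nondecreasing,
`I ≤ T Ā⁻¹(1/T) λ`; let `λ` decrease to the Luxemburg norm.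
-/

section GreatestConvexRadialMinorant

variable {Φ : Ed d → ℝ}

lemma radialConvexMinorant_zero (h0 : ∀ x, 0 ≤ Φ x) : RadialConvexMinorant Φ (fun _ => 0) :=
  ⟨convexOn_const _ convex_univ, fun _ => le_rfl, fun _ _ _ => rfl, h0⟩

lemma le_aPhi {Ψ : Ed d → ℝ} (hΨ : RadialConvexMinorant Φ Ψ) (x : Ed d) : Ψ x ≤ APhi Φ x :=
  le_csSup ⟨Φ x, by rintro r ⟨Ψ', hΨ', rfl⟩; exact hΨ'.2.2.2 x⟩ ⟨Ψ, hΨ, rfl⟩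

lemma aPhi_nonneg (h0 : ∀ x, 0 ≤ Φ x) (x : Ed d) : 0 ≤ APhi Φ x :=
  le_aPhi (radialConvexMinorant_zero h0) x

lemma aPhi_le (h0 : ∀ x, 0 ≤ Φ x) (x : Ed d) : APhi Φ x ≤ Φ x :=
  Real.sSup_le (by rintro r ⟨Ψ, hΨ, rfl⟩; exact hΨ.2.2.2 x) (h0 x)

lemma aPhi_congr_norm {x y : Ed d} (h : ‖x‖ = ‖y‖) : APhi Φ x = APhi Φ y := by
  unfold APhi
  congr 1
  ext r
  constructor <;> rintro ⟨Ψ, hΨ, rfl⟩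
  · exact ⟨Ψ, hΨ, hΨ.2.2.1 x y h⟩
  · exact ⟨Ψ, hΨ, (hΨ.2.2.1 x y h).symm⟩

lemma convexOn_aPhi (h0 : ∀ x, 0 ≤ Φ x) : ConvexOn ℝ univ (APhi Φ) := by
  refine ⟨convex_univ, fun x _ y _ a b ha hb hab => ?_⟩
  refine Real.sSup_le ?_ (by have := aPhi_nonneg h0 x; have := aPhi_nonneg h0 y; positivity)
  rintro r ⟨Ψ, hΨ, rfl⟩
  calc Ψ (a • x + b • y) ≤ a * Ψ x + b * Ψ y := hΨ.1.2 (mem_univ x) (mem_univ y) ha hb hab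
    _ ≤ a * APhi Φ x + b * APhi Φ y := by gcongr <;> exact le_aPhi hΨ _

lemma continuous_aPhi (h0 : ∀ x, 0 ≤ Φ x) : Continuous (APhi Φ) :=
  continuousOn_univ.mp ((convexOn_aPhi h0).continuousOn isOpen_univ)

lemma aPhi_smul_le (h0 : ∀ x, 0 ≤ Φ x) {r : ℝ} (hr : |r| ≤ 1) (y : Ed d) :
    APhi Φ (r • y) ≤ APhi Φ y := by
  obtain ⟨hr₁, hr₂⟩ := abs_le.mp hr
  have hsplit : r • y = ((1 - r) / 2) • (-y) + ((1 + r) / 2) • y := by module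
  calc APhi Φ (r • y) ≤ (1 - r) / 2 * APhi Φ (-y) + (1 + r) / 2 * APhi Φ y := by
        rw [hsplit]
        exact (convexOn_aPhi h0).2 (mem_univ _) (mem_univ _) (by linarith) (by linarith)
          (by ring)
    _ = APhi Φ y := by rw [aPhi_congr_norm (norm_neg y)]; ring

lemma aPhi_le_aPhi_of_norm_le (h0 : ∀ x, 0 ≤ Φ x) {x y : Ed d} (h : ‖x‖ ≤ ‖y‖) :
    APhi Φ x ≤ APhi Φ y := by
  rcases eq_or_ne y 0 with rfl | hy
  · rw [norm_le_zero_iff.mp (h.trans_eq norm_zero)]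
  have hy' : 0 < ‖y‖ := norm_pos_iff.mpr hy
  have hr : |‖x‖ / ‖y‖| ≤ 1 := by
    rw [abs_of_nonneg (by positivity)]; exact div_le_one_of_le₀ h hy'.le
  calc APhi Φ x = APhi Φ ((‖x‖ / ‖y‖) • y) := by
        refine aPhi_congr_norm ?_
        rw [norm_smul, Real.norm_of_nonneg (by positivity), div_mul_cancel₀ _ hy'.ne']
    _ ≤ APhi Φ y := aPhi_smul_le h0 hr y

lemma aPhi_average_norm_smul_le {α : Type*} [MeasurableSpace α] {μ : Measure α}
    [IsFiniteMeasure μ] [NeZero μ] (h0 : ∀ x, 0 ≤ Φ x) {g : α → Ed d} (hg : Integrable g μ)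
    (hΦg : Integrable (fun a => Φ (g a)) μ) {e : Ed d} (he : ‖e‖ = 1) :
    APhi Φ ((⨍ a, ‖g a‖ ∂μ) • e) ≤ ⨍ a, Φ (g a) ∂μ := by
  have hradial : ∀ a, APhi Φ (‖g a‖ • e) = APhi Φ (g a) := fun a =>
    aPhi_congr_norm (by rw [norm_smul, he, mul_one, norm_norm])
  have hAg : Integrable (fun a => APhi Φ (g a)) μ :=
    hΦg.mono' ((continuous_aPhi h0).comp_aestronglyMeasurable hg.1)
      (ae_of_all _ fun a => by
        rw [Real.norm_of_nonneg (aPhi_nonneg h0 _)]; exact aPhi_le h0 _)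
  have hjensen := (convexOn_aPhi h0).map_average_le (continuous_aPhi h0).continuousOn
    isClosed_univ (ae_of_all μ fun a => mem_univ (‖g a‖ • e)) (hg.norm.smul_const e)
    (by simpa only [Function.comp_def, hradial] using hAg)
  calc APhi Φ ((⨍ a, ‖g a‖ ∂μ) • e) = APhi Φ (⨍ a, ‖g a‖ • e ∂μ) := by
        rw [average_eq, average_eq, integral_smul_const, smul_assoc]
    _ ≤ ⨍ a, APhi Φ (g a) ∂μ := by simpa only [hradial] using hjensen
    _ ≤ ⨍ a, Φ (g a) ∂μ := by
        simp only [average_eq, smul_eq_mul]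
        exact mul_le_mul_of_nonneg_left (integral_mono hAg hΦg fun a => aPhi_le h0 _)
          (by positivity)

end GreatestConvexRadialMinorant

section Luxemburg

variable {T : ℝ} {Φ : Ed d → ℝ}

lemma rhoE_smul_le (hconv : ConvexOn ℝ univ Φ) (hΦ0 : Φ 0 = 0) {κ : ℝ} (hκ0 : 0 ≤ κ)
    (hκ1 : κ ≤ 1) (v : ℝ → Ed d) :
    rhoE T Φ (fun t => κ • v t) ≤ ENNReal.ofReal κ * rhoE T Φ v := by
  unfold rhoE
  rw [← lintegral_const_mul' _ _ ENNReal.ofReal_ne_top]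
  refine lintegral_mono fun t => ?_
  rw [← ENNReal.ofReal_mul hκ0]
  refine ENNReal.ofReal_le_ofReal ?_
  simpa [hΦ0] using hconv.2 (mem_univ (v t)) (mem_univ 0) hκ0 (sub_nonneg.mpr hκ1)
    (add_sub_cancel κ 1)

lemma nonempty_luxNorm_set (hconv : ConvexOn ℝ univ Φ) (hΦ0 : Φ 0 = 0) {u : ℝ → Ed d}
    (hu : MemLphi T Φ u) : {l : ℝ | 0 < l ∧ rhoE T Φ (fun t => l⁻¹ • u t) ≤ 1}.Nonempty := by
  obtain ⟨l, hl, hfin⟩ := hu.2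
  set R := (rhoE T Φ fun t => l • u t).toReal
  have hR : 0 ≤ R := ENNReal.toReal_nonneg
  set κ := (1 + R)⁻¹
  have hκ1 : κ ≤ 1 := inv_le_one_of_one_le₀ (by linarith)
  refine ⟨(κ * l)⁻¹, by positivity, ?_⟩
  simp only [inv_inv, ← smul_smul]
  calc rhoE T Φ (fun t => κ • l • u t) ≤ ENNReal.ofReal κ * ENNReal.ofReal R := by
        rw [ENNReal.ofReal_toReal hfin.ne]
        exact rhoE_smul_le hconv hΦ0 (by positivity) hκ1 _
    _ = ENNReal.ofReal (R / (1 + R)) := by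
        rw [← ENNReal.ofReal_mul (by positivity), div_eq_inv_mul]
    _ ≤ 1 := ENNReal.ofReal_le_one.mpr (div_le_one_of_le₀ (by linarith) (by positivity))

lemma luxNorm_nonneg (u : ℝ → Ed d) : 0 ≤ luxNorm T Φ u :=
  Real.sInf_nonneg fun _ hl => hl.1.le

lemma rhoE_inv_smul_lt_one (hconv : ConvexOn ℝ univ Φ) (hΦ0 : Φ 0 = 0) {u : ℝ → Ed d}
    (hu : MemLphi T Φ u) {l : ℝ} (hl : luxNorm T Φ u < l) :
    rhoE T Φ (fun t => l⁻¹ • u t) < 1 := by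
  obtain ⟨m, ⟨hm, hρm⟩, hml⟩ := exists_lt_of_csInf_lt (nonempty_luxNorm_set hconv hΦ0 hu) hl
  have hl0 : 0 < l := hm.trans hml
  have hsplit : (fun t => l⁻¹ • u t) = fun t => (m / l) • m⁻¹ • u t := by
    funext t; rw [smul_smul]; congr 1; field_simp
  calc rhoE T Φ (fun t => l⁻¹ • u t)
      ≤ ENNReal.ofReal (m / l) * rhoE T Φ (fun t => m⁻¹ • u t) := by
        rw [hsplit]
        exact rhoE_smul_le hconv hΦ0 (by positivity) ((div_le_one hl0).mpr hml.le) _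
    _ ≤ ENNReal.ofReal (m / l) * 1 := by gcongr
    _ < 1 := by
        rw [mul_one, ENNReal.ofReal_lt_one]; exact (div_lt_one hl0).mpr hml

lemma integrableOn_and_integral_eq_toReal_rhoE (hcont : Continuous Φ) (h0 : ∀ x, 0 ≤ Φ x)
    {v : ℝ → Ed d} (hv : AEMeasurable v (volume.restrict (Icc 0 T))) (hρ : rhoE T Φ v < ⊤) :
    IntegrableOn (fun t => Φ (v t)) (Icc 0 T) ∧
      ∫ t in Icc 0 T, Φ (v t) = (rhoE T Φ v).toReal := by
  have hmeas := (hcont.measurable.comp_aemeasurable hv).aestronglyMeasurable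
  have hnn : 0 ≤ᵐ[volume.restrict (Icc 0 T)] fun t => Φ (v t) := ae_of_all _ fun t => h0 _
  refine ⟨⟨hmeas, (hasFiniteIntegral_iff_ofReal hnn).mpr hρ⟩, ?_⟩
  rw [integral_eq_lintegral_of_nonneg_ae hnn hmeas]
  rfl

end Luxemburg

section Primitive

variable {E : Type*} [NormedAddCommGroup E] [NormedSpace ℝ E] {T : ℝ}
  {u u' : ℝ → E}

lemma norm_sub_le_integral_norm_of_eq_primitive (hu' : IntegrableOn u' (Icc 0 T))
    (hu : ∀ t ∈ Icc (0:ℝ) T, u t = u 0 + ∫ s in (0:ℝ)..t, u' s) {s t : ℝ} (hs : s ∈ Icc 0 T)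
    (ht : t ∈ Icc 0 T) : ‖u t - u s‖ ≤ ∫ x in Icc 0 T, ‖u' x‖ := by
  have hii : ∀ {a b}, a ∈ Icc 0 T → b ∈ Icc 0 T → IntervalIntegrable u' volume a b :=
    fun ha hb => (hu'.mono_set (uIcc_subset_Icc ha hb)).intervalIntegrable
  have h0 : (0:ℝ) ∈ Icc 0 T := left_mem_Icc.mpr (hs.1.trans hs.2)
  calc ‖u t - u s‖ = ‖∫ x in s..t, u' x‖ := by
        rw [hu t ht, hu s hs, add_sub_add_left_eq_sub,
          intervalIntegral.integral_interval_sub_left (hii h0 ht) (hii h0 hs)]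
    _ = ‖∫ x in uIoc s t, u' x‖ := intervalIntegral.norm_integral_eq_norm_integral_uIoc _
    _ ≤ ∫ x in uIoc s t, ‖u' x‖ := norm_integral_le_integral_norm _
    _ ≤ ∫ x in Icc 0 T, ‖u' x‖ :=
        setIntegral_mono_set hu'.norm (ae_of_all _ fun _ => norm_nonneg _)
          (uIoc_subset_uIcc.trans (uIcc_subset_Icc hs ht)).eventuallyLE

lemma continuousOn_of_eq_primitive (hT : 0 ≤ T) (hu' : IntegrableOn u' (Icc 0 T))
    (hu : ∀ t ∈ Icc (0:ℝ) T, u t = u 0 + ∫ s in (0:ℝ)..t, u' s) : ContinuousOn u (Icc 0 T) := by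
  rw [← uIcc_of_le hT] at hu' ⊢
  refine (continuousOn_const.add (intervalIntegral.continuousOn_primitive_interval hu')).congr
    fun t ht => hu t ?_
  rwa [← uIcc_of_le hT]

end Primitive

lemma norm_sub_average_le {α E : Type*} [MeasurableSpace α] [NormedAddCommGroup E]
    [NormedSpace ℝ E] [CompleteSpace E] {μ : Measure α} [IsFiniteMeasure μ] [NeZero μ]
    {f : α → E} (hf : Integrable f μ) {x : E} {C : ℝ} (h : ∀ᵐ a ∂μ, ‖x - f a‖ ≤ C) :
    ‖x - ⨍ a, f a ∂μ‖ ≤ C := by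
  simp only [← dist_eq_norm, dist_comm x, ← Metric.mem_closedBall] at h ⊢
  exact (convex_closedBall x C).average_mem Metric.isClosed_closedBall h hf

lemma measureReal_restrict_Icc_univ {T : ℝ} (hT : 0 ≤ T) :
    (volume.restrict (Icc 0 T)).real univ = T := by
  rw [measureReal_restrict_apply_univ, Real.volume_real_Icc_of_le hT, sub_zero]

lemma neZero_volume_restrict_Icc {T : ℝ} (hT : 0 < T) : NeZero (volume.restrict (Icc 0 T)) :=
  ⟨fun h => by simpa [hT.le, hT.ne'] using congrArg (·.real univ) h⟩

lemma norm_sub_setAverage_le_integral_norm {E : Type*} [NormedAddCommGroup E] [NormedSpace ℝ E]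
    [CompleteSpace E] {T : ℝ} (hT : 0 < T) {u u' : ℝ → E} (hu' : IntegrableOn u' (Icc 0 T))
    (hu : ∀ t ∈ Icc (0:ℝ) T, u t = u 0 + ∫ s in (0:ℝ)..t, u' s) {t : ℝ} (ht : t ∈ Icc 0 T) :
    ‖u t - T⁻¹ • ∫ s in Icc 0 T, u s‖ ≤ ∫ s in Icc 0 T, ‖u' s‖ := by
  have := neZero_volume_restrict_Icc hT
  have hmean : T⁻¹ • ∫ s in Icc 0 T, u s = ⨍ s in Icc 0 T, u s := by
    rw [average_eq, measureReal_restrict_Icc_univ hT.le]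
  rw [hmean]
  exact norm_sub_average_le ((continuousOn_of_eq_primitive hT.le hu' hu).integrableOn_Icc)
    ((ae_restrict_iff' measurableSet_Icc).mpr
      (ae_of_all _ fun s hs => norm_sub_le_integral_norm_of_eq_primitive hu' hu hs ht))

lemma integral_norm_le_of_luxNorm_lt {T : ℝ} (hT : 0 < T) {Φ : Ed d → ℝ} (hcont : Continuous Φ)
    (hconv : ConvexOn ℝ univ Φ) (h0 : ∀ x, 0 ≤ Φ x) (hΦ0 : Φ 0 = 0) {Abar : ℝ → ℝ}
    (hAbar : ∀ x : Ed d, Abar ‖x‖ = APhi Φ x) {c : ℝ} (hc0 : 0 ≤ c) (hc : Abar c = 1 / T)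
    {u' : ℝ → Ed d} (hu' : IntegrableOn u' (Icc 0 T)) (hmem : MemLphi T Φ u') {l : ℝ}
    (hl : luxNorm T Φ u' < l) : ∫ s in Icc 0 T, ‖u' s‖ ≤ T * c * l := by
  have hl0 : 0 < l := (luxNorm_nonneg u').trans_lt hl
  rcases subsingleton_or_nontrivial (Ed d) with hd | hd
  · simp only [Subsingleton.elim (u' _) 0, norm_zero, integral_zero]
    positivity
  obtain ⟨e, he⟩ := exists_norm_eq (Ed d) zero_le_one
  have hAbar_e : ∀ r, 0 ≤ r → Abar r = APhi Φ (r • e) := fun r hr => by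
    rw [← hAbar, norm_smul, he, mul_one, Real.norm_of_nonneg hr]
  have := neZero_volume_restrict_Icc hT
  have hρ := rhoE_inv_smul_lt_one hconv hΦ0 hmem hl
  obtain ⟨hΦint, hΦeq⟩ :=
    integrableOn_and_integral_eq_toReal_rhoE (v := fun s => l⁻¹ • u' s) hcont h0
      (hmem.1.const_smul l⁻¹) (hρ.trans ENNReal.one_lt_top)
  set m := ⨍ s in Icc 0 T, ‖l⁻¹ • u' s‖
  have hm : m = (T * l)⁻¹ * ∫ s in Icc 0 T, ‖u' s‖ := by
    simp only [m, average_eq, measureReal_restrict_Icc_univ hT.le, norm_smul,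
      Real.norm_of_nonneg (inv_nonneg.mpr hl0.le), integral_const_mul, smul_eq_mul]
    ring
  have hm0 : 0 ≤ m := by
    rw [hm]
    exact mul_nonneg (by positivity) (integral_nonneg fun _ => norm_nonneg _)
  have hAm : Abar m < Abar c := calc
    Abar m = APhi Φ (m • e) := hAbar_e m hm0
    _ ≤ ⨍ s in Icc 0 T, Φ (l⁻¹ • u' s) :=
        aPhi_average_norm_smul_le h0 (hu'.smul l⁻¹) hΦint he
    _ = T⁻¹ * (rhoE T Φ fun s => l⁻¹ • u' s).toReal := by
        rw [average_eq, measureReal_restrict_Icc_univ hT.le, smul_eq_mul, hΦeq]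
    _ < T⁻¹ * 1 := by
        gcongr
        exact ENNReal.toReal_lt_of_lt_ofReal (by rwa [ENNReal.ofReal_one])
    _ = Abar c := by rw [hc, one_div, mul_one]
  have hmc : m ≤ c := by
    by_contra! hcm
    refine hAm.not_ge ?_
    rw [hAbar_e c hc0, hAbar_e m hm0]
    refine aPhi_le_aPhi_of_norm_le h0 ?_
    simp only [norm_smul, he, mul_one, Real.norm_of_nonneg hc0, Real.norm_of_nonneg hm0]
    exact hcm.le
  rw [hm, inv_mul_le_iff₀ (by positivity)] at hmc
  linarith

/-- **Poincaré–Wirtinger's inequality.** For `u ∈ W^1L^Φ`, with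
`ū = (1/T)∫_0^T u` and `ũ = u − ū`:
`sup_{t∈[0,T]} |ũ(t)| ≤ T ⬝ Ā⁻¹(1/T) ⬝ ‖u'‖_{L^Φ}`. -/
theorem statement4 {d : ℕ} (T : ℝ) (hT : 0 < T) (Φ : Ed d → ℝ) (hΦ : IsNInf Φ)
    (Abar AbarInv : ℝ → ℝ)
    (hAbar : ∀ x : Ed d, Abar ‖x‖ = APhi Φ x)
    (hAbarInv : ∀ r ∈ Ici (0:ℝ), AbarInv r ∈ Ici (0:ℝ) ∧ Abar (AbarInv r) = r)
    (u u' : ℝ → Ed d) (hu : MemW1Lphi T Φ u u') (t : ℝ) (ht : t ∈ Icc (0:ℝ) T) :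
    ‖u t - T⁻¹ • ∫ s in Icc (0:ℝ) T, u s‖ ≤ T * AbarInv (1 / T) * luxNorm T Φ u' := by
  obtain ⟨hdiff, hconv, h0, hΦ0, -⟩ := hΦ
  obtain ⟨hu'int, hmem, hprim⟩ := hu
  obtain ⟨hc0, hc⟩ := hAbarInv (1 / T) (mem_Ici.mpr (by positivity))
  refine (norm_sub_setAverage_le_integral_norm hT hu'int hprim ht).trans ?_
  exact ge_of_tendsto (x := 𝓝[>] luxNorm T Φ u')
    (((continuous_const_mul _).tendsto _).mono_left nhdsWithin_le_nhds)
    (eventually_nhdsWithin_of_forall fun l hl =>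
      integral_norm_le_of_luxNorm_lt hT hdiff.continuous hconv h0 hΦ0 hAbar hc0 hc hu'int hmem hl)
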